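/- The monomials α^r δ^s β^t, for all r, s, t ∈ ℕ, form an F-vector-space basis of the subalgebra 𝔠 of the Racah algebra ℜ generated by α, β, γ, δ. -/

import Mathlib

noncomputable section

/-- Generators of the Racah algebra. -/
inductive RGen : Type
  | A | B | C | D

namespace Racah

variable (F : Type) [Field F]

/-- The free algebra on the generators `A`, `B`, `C`, `D`. -/
abbrev FA := FreeAlgebra F RGen

def fA : FA F := FreeAlgebra.ι F RGen.A
def fB : FA F := FreeAlgebra.ι F RGen.B
def fC : FA F := FreeAlgebra.ι F RGen.C
def fD : FA F := FreeAlgebra.ι F RGen.D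

/-- α = [A,D] + AC − BA in the free algebra. -/
def fAl : FA F := (fA F * fD F - fD F * fA F) + fA F * fC F - fB F * fA F
/-- β = [B,D] + BA − CB in the free algebra. -/
def fBe : FA F := (fB F * fD F - fD F * fB F) + fB F * fA F - fC F * fB F
/-- γ = [C,D] + CB − AC in the free algebra. -/
def fGa : FA F := (fC F * fD F - fD F * fC F) + fC F * fB F - fA F * fC F

/-- The defining relations of the Racah algebra:
`[A,B] = [B,C] = [C,A] = 2D` and each of `α`, `β`, `γ` commutes with each of `A`, `B`, `C`, `D`. -/
inductive Rel : FA F → FA F → Prop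
  | AB : Rel (fA F * fB F - fB F * fA F) (2 * fD F)
  | BC : Rel (fB F * fC F - fC F * fB F) (2 * fD F)
  | CA : Rel (fC F * fA F - fA F * fC F) (2 * fD F)
  | cen (c x : FA F) (hc : c = fAl F ∨ c = fBe F ∨ c = fGa F)
      (hx : x = fA F ∨ x = fB F ∨ x = fC F ∨ x = fD F) :
      Rel (c * x) (x * c)

/-- The Racah algebra ℜ. -/
abbrev R := RingQuot (Rel F)

def A : R F := RingQuot.mkAlgHom F (Rel F) (fA F)
def B : R F := RingQuot.mkAlgHom F (Rel F) (fB F)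
def C : R F := RingQuot.mkAlgHom F (Rel F) (fC F)
def D : R F := RingQuot.mkAlgHom F (Rel F) (fD F)

/-- α = [A,D] + AC − BA. -/
def al : R F := (A F * D F - D F * A F) + A F * C F - B F * A F
/-- β = [B,D] + BA − CB. -/
def be : R F := (B F * D F - D F * B F) + B F * A F - C F * B F
/-- γ = [C,D] + CB − AC. -/
def ga : R F := (C F * D F - D F * C F) + C F * B F - A F * C F
/-- δ = A + B + C. -/
def de : R F := A F + B F + C F

end Racah

namespace Racah

variable (F : Type) [Field F]

/-- The subalgebra 𝔠 of ℜ generated by α, β, γ, δ. -/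
def cC : Subalgebra F (R F) := Algebra.adjoin F {al F, be F, ga F, de F}

/-- The distinguished representative
`D² + A² + B² + ((δ+2){A,B} − {A²,B} − {A,B²})/2 + A(β−δ) + B(δ−α)` of the Casimir class. -/
def casBase : R F := D F ^ 2 + A F ^ 2 + B F ^ 2
  + (2 : F)⁻¹ • ((de F + 2) * (A F * B F + B F * A F)
      - (A F ^ 2 * B F + B F * A F ^ 2) - (A F * B F ^ 2 + B F ^ 2 * A F))
  + A F * (be F - de F) + B F * (de F - al F)

/-- A Casimir element of ℜ is an element of the coset `casBase + 𝔠`. -/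
def IsCasimir (x : R F) : Prop := x - casBase F ∈ cC F

end Racah

/-!
The elements `α` and `β` are central by definition, and `δ` is central because it commutes with
`A`, `B`, `C`, hence with `D = [A, B] / 2`; thus `α + β + γ = [δ, D] = 0`, and the monomials
`α^r δ^s β^t` span `𝔠` since they are closed under multiplication. For their independence,
specialise to the commutative quotient `A ↦ x`, `B ↦ y`, `C ↦ z`, `D ↦ 0` of `ℜ`: there `α`, `δ`,
`β` become `x(z - y)`, `x + y + z`, `y(x - z)`, with leading monomials `xz`, `z`, `yz` for the
lexicographic order with `z > y > x`, so `α^r δ^s β^t` has leading monomial `x^r y^t z^(r+s+t)`,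
and these are pairwise distinct.
-/

open MvPolynomial

theorem MonomialOrder.linearIndependent_of_injective_degree {σ ι R : Type*} [CommRing R]
    [NoZeroDivisors R] (m : MonomialOrder σ) {v : ι → MvPolynomial σ R} (hv : ∀ i, v i ≠ 0)
    (hdeg : Function.Injective fun i ↦ m.degree (v i)) : LinearIndependent R v := by
  classical
  rw [linearIndependent_iff]
  intro l hl
  by_contra hne
  obtain ⟨i₀, hi₀, hmax⟩ := l.support.exists_max_image
    (fun i ↦ m.toSyn (m.degree (v i))) (Finsupp.support_nonempty_iff.mpr hne)
  have hcoeff : (Finsupp.linearCombination R v l).coeff (m.degree (v i₀))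
      = l i₀ * m.leadingCoeff (v i₀) := by
    rw [Finsupp.linearCombination_apply, Finsupp.sum, coeff_sum, Finset.sum_eq_single i₀]
    · rw [coeff_smul, smul_eq_mul, leadingCoeff]
    · intro i hi hne
      rw [coeff_smul, m.coeff_eq_zero_of_lt, smul_zero]
      exact lt_of_le_of_ne (hmax i hi) fun h ↦ hne (hdeg (m.toSyn.injective h))
    · exact fun h ↦ absurd hi₀ h
  rw [hl, coeff_zero] at hcoeff
  exact mul_ne_zero (Finsupp.mem_support_iff.mp hi₀) (m.leadingCoeff_ne_zero_iff.mpr (hv i₀))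
    hcoeff.symm

theorem MonomialOrder.lex_degree_X_sub_X {σ R : Type*} [LinearOrder σ] [WellFoundedGT σ]
    [CommRing R] [Nontrivial R] {i j : σ} (hij : i ≠ j) :
    lex.degree (X i - X j : MvPolynomial σ R) = Finsupp.single (min i j) 1 := by
  rcases hij.lt_or_gt with h | h
  · rw [min_eq_left h.le, degree_sub_of_lt, degree_X]
    simpa only [degree_X] using lex_lt_iff.mpr (Finsupp.Lex.single_lt_iff.mpr h)
  · rw [min_eq_right h.le, ← neg_sub, degree_neg, degree_sub_of_lt, degree_X]
    simpa only [degree_X] using lex_lt_iff.mpr (Finsupp.Lex.single_lt_iff.mpr h)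

namespace Racah

variable (F : Type) [Field F]

lemma A_mul_B_sub_B_mul_A : A F * B F - B F * A F = 2 * D F := by
  simpa [A, B, D, map_ofNat] using RingQuot.mkAlgHom_rel F (Rel.AB (F := F))

lemma B_mul_C_sub_C_mul_B : B F * C F - C F * B F = 2 * D F := by
  simpa [B, C, D, map_ofNat] using RingQuot.mkAlgHom_rel F (Rel.BC (F := F))

lemma C_mul_A_sub_A_mul_C : C F * A F - A F * C F = 2 * D F := by
  simpa [C, A, D, map_ofNat] using RingQuot.mkAlgHom_rel F (Rel.CA (F := F))

lemma commute_of_commute_generators {x : R F} (hA : Commute x (A F)) (hB : Commute x (B F))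
    (hC : Commute x (C F)) (hD : Commute x (D F)) (y : R F) : Commute x y := by
  obtain ⟨y, rfl⟩ := RingQuot.mkAlgHom_surjective F (Rel F) y
  induction y using FreeAlgebra.induction with
  | grade0 r => rw [AlgHom.commutes]; exact Algebra.commute_algebraMap_right r x
  | grade1 g => cases g <;> assumption
  | mul a b ha hb => rw [map_mul]; exact ha.mul_right hb
  | add a b ha hb => rw [map_add]; exact ha.add_right hb

lemma mem_center_of_commute_generators {x : R F} (hA : Commute x (A F))
    (hB : Commute x (B F)) (hC : Commute x (C F)) (hD : Commute x (D F)) :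
    x ∈ Subalgebra.center F (R F) :=
  Subalgebra.mem_center_iff.mpr fun y ↦ (commute_of_commute_generators F hA hB hC hD y).eq.symm

lemma commute_mkAlgHom_of_rel {c x : FA F} (hc : c = fAl F ∨ c = fBe F ∨ c = fGa F)
    (hx : x = fA F ∨ x = fB F ∨ x = fC F ∨ x = fD F) :
    Commute (RingQuot.mkAlgHom F (Rel F) c) (RingQuot.mkAlgHom F (Rel F) x) := by
  have h := RingQuot.mkAlgHom_rel F (Rel.cen c x hc hx)
  rwa [map_mul, map_mul] at h

lemma al_mem_center : al F ∈ Subalgebra.center F (R F) := by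
  have hal : RingQuot.mkAlgHom F (Rel F) (fAl F) = al F := by simp [fAl, al, A, B, C, D]
  rw [← hal]
  apply mem_center_of_commute_generators <;> apply commute_mkAlgHom_of_rel <;> simp

lemma be_mem_center : be F ∈ Subalgebra.center F (R F) := by
  have hbe : RingQuot.mkAlgHom F (Rel F) (fBe F) = be F := by simp [fBe, be, A, B, C, D]
  rw [← hbe]
  apply mem_center_of_commute_generators <;> apply commute_mkAlgHom_of_rel <;> simp

lemma de_commute_A : Commute (de F) (A F) := by
  rw [commute_iff_eq, ← sub_eq_zero]
  calc de F * A F - A F * de F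
      = (C F * A F - A F * C F) - (A F * B F - B F * A F) := by simp only [de]; noncomm_ring
    _ = 0 := by rw [C_mul_A_sub_A_mul_C, A_mul_B_sub_B_mul_A, sub_self]

lemma de_commute_B : Commute (de F) (B F) := by
  rw [commute_iff_eq, ← sub_eq_zero]
  calc de F * B F - B F * de F
      = (A F * B F - B F * A F) - (B F * C F - C F * B F) := by simp only [de]; noncomm_ring
    _ = 0 := by rw [A_mul_B_sub_B_mul_A, B_mul_C_sub_C_mul_B, sub_self]

lemma de_commute_C : Commute (de F) (C F) := by
  rw [commute_iff_eq, ← sub_eq_zero]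
  calc de F * C F - C F * de F
      = (B F * C F - C F * B F) - (C F * A F - A F * C F) := by simp only [de]; noncomm_ring
    _ = 0 := by rw [B_mul_C_sub_C_mul_B, C_mul_A_sub_A_mul_C, sub_self]

lemma de_commute_D (h2 : (2 : F) ≠ 0) : Commute (de F) (D F) := by
  have hD : D F = (2 : F)⁻¹ • (A F * B F - B F * A F) := by
    rw [A_mul_B_sub_B_mul_A, ← map_ofNat (algebraMap F (R F)) 2, ← Algebra.smul_def,
      inv_smul_smul₀ h2]
  rw [hD]
  exact (((de_commute_A F).mul_right (de_commute_B F)).sub_right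
    ((de_commute_B F).mul_right (de_commute_A F))).smul_right _

lemma de_mem_center (h2 : (2 : F) ≠ 0) : de F ∈ Subalgebra.center F (R F) :=
  mem_center_of_commute_generators F (de_commute_A F) (de_commute_B F) (de_commute_C F)
    (de_commute_D F h2)

lemma ga_eq_neg_al_sub_be (h2 : (2 : F) ≠ 0) : ga F = -al F - be F := by
  have h : al F + be F + ga F = de F * D F - D F * de F := by
    simp only [al, be, ga, de]; noncomm_ring
  rw [(de_commute_D F h2).eq, sub_self] at h
  rw [← sub_eq_zero, ← h]
  abel

def cMonomial (i : ℕ × ℕ × ℕ) : R F := al F ^ i.1 * de F ^ i.2.1 * be F ^ i.2.2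

lemma cMonomial_mul (h2 : (2 : F) ≠ 0) (i j : ℕ × ℕ × ℕ) :
    cMonomial F i * cMonomial F j = cMonomial F (i + j) := by
  let a : Subalgebra.center F (R F) := ⟨al F, al_mem_center F⟩
  let d : Subalgebra.center F (R F) := ⟨de F, de_mem_center F h2⟩
  let b : Subalgebra.center F (R F) := ⟨be F, be_mem_center F⟩
  have hval (k : ℕ × ℕ × ℕ) : cMonomial F k = ↑(a ^ k.1 * d ^ k.2.1 * b ^ k.2.2) := rfl
  rw [hval, hval, hval, ← Subalgebra.coe_mul]
  congr 1
  simp only [Prod.fst_add, Prod.snd_add, pow_add]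
  ring

lemma cMonomial_mem (i : ℕ × ℕ × ℕ) : cMonomial F i ∈ cC F := by
  have hal : al F ∈ cC F := Algebra.subset_adjoin (by simp)
  have hde : de F ∈ cC F := Algebra.subset_adjoin (by simp)
  have hbe : be F ∈ cC F := Algebra.subset_adjoin (by simp)
  exact mul_mem (mul_mem (pow_mem hal _) (pow_mem hde _)) (pow_mem hbe _)

lemma span_cMonomial (h2 : (2 : F) ≠ 0) :
    Submodule.span F (Set.range (cMonomial F)) = Subalgebra.toSubmodule (cC F) := by
  set V := Submodule.span F (Set.range (cMonomial F))
  have hmem (i : ℕ × ℕ × ℕ) : cMonomial F i ∈ V := Submodule.subset_span ⟨i, rfl⟩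
  refine le_antisymm (Submodule.span_le.mpr ?_) ?_
  · rintro _ ⟨i, rfl⟩
    exact cMonomial_mem F i
  have hmul : V * V ≤ V := by
    rw [Submodule.span_mul_span]
    refine Submodule.span_le.mpr ?_
    rintro _ ⟨_, ⟨i, rfl⟩, _, ⟨j, rfl⟩, rfl⟩
    show cMonomial F i * cMonomial F j ∈ V
    rw [cMonomial_mul F h2]
    exact hmem (i + j)
  have hone : (1 : R F) ∈ V := by simpa [cMonomial] using hmem 0
  have hgen : cC F ≤ V.toSubalgebra hone fun x y hx hy ↦ hmul (Submodule.mul_mem_mul hx hy) := by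
    refine Algebra.adjoin_le ?_
    rintro _ (rfl | rfl | rfl | rfl)
    · simpa [cMonomial] using hmem (1, 0, 0)
    · simpa [cMonomial] using hmem (0, 0, 1)
    · rw [ga_eq_neg_al_sub_be F h2]
      simpa [cMonomial] using V.sub_mem (V.neg_mem (hmem (1, 0, 0))) (hmem (0, 0, 1))
    · simpa [cMonomial] using hmem (0, 1, 0)
  exact hgen

section Independence

open Finsupp MonomialOrder

/-- `X 0`, `X 1`, `X 2` play the roles of `z`, `y`, `x`, so that `lex` compares `z` first. -/
def toMvPolynomial : R F →ₐ[F] MvPolynomial (Fin 3) F :=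
  RingQuot.liftAlgHom F ⟨FreeAlgebra.lift F fun
      | .A => X 2 | .B => X 1 | .C => X 0 | .D => 0, by
    rintro _ _ (_ | _ | _ | ⟨c, x, -, -⟩)
    all_goals simp only [fA, fB, fC, fD, map_sub, map_mul, map_ofNat, FreeAlgebra.lift_ι_apply]
    · ring
    · ring
    · ring
    · exact mul_comm _ _⟩

@[simp] lemma toMvPolynomial_A : toMvPolynomial F (A F) = X 2 := by
  simp [toMvPolynomial, A, fA]

@[simp] lemma toMvPolynomial_B : toMvPolynomial F (B F) = X 1 := by
  simp [toMvPolynomial, B, fB]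

@[simp] lemma toMvPolynomial_C : toMvPolynomial F (C F) = X 0 := by
  simp [toMvPolynomial, C, fC]

@[simp] lemma toMvPolynomial_D : toMvPolynomial F (D F) = 0 := by
  simp [toMvPolynomial, D, fD]

lemma degree_toMvPolynomial_al :
    lex.degree (toMvPolynomial F (al F)) = single 2 1 + single 0 1 := by
  have h : toMvPolynomial F (al F) = X 2 * (X 0 - X 1) := by simp [al]; ring
  rw [h, degree_mul (X_ne_zero _), degree_X, lex_degree_X_sub_X (by decide)]
  · rfl
  · exact ne_zero_of_degree_ne_zero (by rw [lex_degree_X_sub_X (by decide)]; simp)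

lemma degree_toMvPolynomial_be :
    lex.degree (toMvPolynomial F (be F)) = single 1 1 + single 0 1 := by
  have h : toMvPolynomial F (be F) = X 1 * (X 2 - X 0) := by simp [be]; ring
  rw [h, degree_mul (X_ne_zero _), degree_X, lex_degree_X_sub_X (by decide)]
  · rfl
  · exact ne_zero_of_degree_ne_zero (by rw [lex_degree_X_sub_X (by decide)]; simp)

lemma degree_toMvPolynomial_de : lex.degree (toMvPolynomial F (de F)) = single 0 1 := by
  have h21 : lex.degree (X 2 + X 1 : MvPolynomial (Fin 3) F) = single 1 1 := by
    rw [degree_add_eq_right_of_lt] <;> simp only [degree_X]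
    exact lex_lt_iff.mpr (Lex.single_lt_iff.mpr (by decide))
  have h : toMvPolynomial F (de F) = X 2 + X 1 + X 0 := by simp [de]
  rw [h, degree_add_eq_right_of_lt] <;> simp only [degree_X, h21]
  exact lex_lt_iff.mpr (Lex.single_lt_iff.mpr (by decide))

lemma toMvPolynomial_cMonomial_ne_zero (i : ℕ × ℕ × ℕ) : toMvPolynomial F (cMonomial F i) ≠ 0 := by
  have hne (x : R F) : lex.degree (toMvPolynomial F x) ≠ 0 → toMvPolynomial F x ≠ 0 :=
    ne_zero_of_degree_ne_zero
  have hal := hne _ (by rw [degree_toMvPolynomial_al]; simp)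
  have hde := hne _ (by rw [degree_toMvPolynomial_de]; simp)
  have hbe := hne _ (by rw [degree_toMvPolynomial_be]; simp)
  simp only [cMonomial, map_mul, map_pow]
  exact mul_ne_zero (mul_ne_zero (pow_ne_zero _ hal) (pow_ne_zero _ hde)) (pow_ne_zero _ hbe)

lemma degree_toMvPolynomial_cMonomial (i : ℕ × ℕ × ℕ) :
    lex.degree (toMvPolynomial F (cMonomial F i)) =
      i.1 • (single 2 1 + single 0 1) + i.2.1 • single 0 1 + i.2.2 • (single 1 1 + single 0 1) := by
  have h := toMvPolynomial_cMonomial_ne_zero F i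
  simp only [cMonomial, map_mul, map_pow] at h ⊢
  rw [degree_mul' h, degree_mul' (left_ne_zero_of_mul h), degree_pow, degree_pow, degree_pow,
    degree_toMvPolynomial_al, degree_toMvPolynomial_de, degree_toMvPolynomial_be]

lemma injective_degree_toMvPolynomial_cMonomial :
    Function.Injective fun i ↦ lex.degree (toMvPolynomial F (cMonomial F i)) := by
  rintro ⟨r, s, t⟩ ⟨r', s', t'⟩ h
  simp only [degree_toMvPolynomial_cMonomial] at h
  have h0 := DFunLike.congr_fun h 0
  have h1 := DFunLike.congr_fun h 1
  have h2 := DFunLike.congr_fun h 2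
  simp only [smul_add, smul_single, smul_eq_mul, mul_one, Finsupp.coe_add, Pi.add_apply,
    single_eq_same, ne_eq, Fin.reduceEq, not_false_eq_true, single_eq_of_ne, zero_add,
    add_zero] at h0 h1 h2
  simp only [Prod.mk.injEq]
  omega

lemma linearIndependent_cMonomial : LinearIndependent F (cMonomial F) :=
  LinearIndependent.of_comp (toMvPolynomial F).toLinearMap <|
    lex.linearIndependent_of_injective_degree (toMvPolynomial_cMonomial_ne_zero F)
      (injective_degree_toMvPolynomial_cMonomial F)

end Independence

end Racah

open Racah in
/-- the monomials `α^r δ^s β^t` (r,s,t ∈ ℕ) form an F-vector-space basis of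
the subalgebra 𝔠 of ℜ generated by α, β, γ, δ. -/
theorem stmt12 (F : Type) [Field F] (h2 : (2 : F) ≠ 0) :
    ∃ b : Module.Basis (ℕ × ℕ × ℕ) F (cC F),
      ∀ r s t : ℕ, (b (r, s, t) : Racah.R F) = al F ^ r * de F ^ s * be F ^ t :=
  ⟨(Module.Basis.span (linearIndependent_cMonomial F)).map
      (LinearEquiv.ofEq _ _ (span_cMonomial F h2)), fun r s t ↦
    congrArg Subtype.val (Module.Basis.span_apply (linearIndependent_cMonomial F) (r, s, t))⟩
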